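/- arXiv:1904.10192 — 2 statements merged into one kernel-verified Lean document; each statement's English description precedes it below -/
import Mathlib

section
/- Fix $b\ge 1$ and nonzero complex numbers $r_1,\dots,r_b$ with $|r_j|<1$, and constants $c_1,\dots,c_b$. Let $g_1,\dots,g_b\ge 0$ with $g_b>0$ and $\sum_i g_i = 1$, let $0<\mu<1$, and let $y_i\ge 0$ with $\sum_i y_i=1$ and $Y(z)=\sum_i y_i z^i$ convergent on the closed unit disk. Suppose that for every $n$ with $1\le n\le b-1$: $\sum_{j=1}^b c_j r_j^n\Big[(1-\mu)\sum_{i=n+1}^b g_i r_j^{-i} + \mu\sum_{i=1}^{\infty} y_i r_j^i\Big(\sum_{m=1}^b g_m r_j^{-m} - \sum_{m=1}^{\min(i+n,b)} g_m r_j^{-m}\Big)\Big]=0$. Then $\sum_{j=1}^b c_j r_j^{-k} = 0$ for all $k=1,2,\dots,b-1$. -/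
/-!
Multiplying the bracket of condition `n` by `r_j ^ n` turns it into a polynomial in `r_j⁻¹` of
degree `b - n` whose coefficients `β n k` (`boundaryCoeff`) do not depend on `j`. Summing over
`j`, condition `n` becomes `∑_{k=1}^{b-n} β n k x_k = 0` with `x_k = ∑_j c_j r_j^{-k}`. The
leading coefficient `β n (b - n) = (1 - μ) g_b` is nonzero, so the system is triangular with
nonzero diagonal and, solved from `n = b - 1` down to `n = 1`, forces `x_1 = ⋯ = x_{b-1} = 0`.
-/

open Finset

theorem eq_zero_of_sum_Icc_one_mul_eq_zero {R : Type*} [Semiring R] [NoZeroDivisors R]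
    {N : ℕ} {a : ℕ → ℕ → R} {x : ℕ → R} (hdiag : ∀ m, 1 ≤ m → m ≤ N → a m m ≠ 0)
    (h : ∀ m, 1 ≤ m → m ≤ N → ∑ k ∈ Icc 1 m, a m k * x k = 0) :
    ∀ m, 1 ≤ m → m ≤ N → x m = 0 := by
  intro m
  induction m using Nat.strong_induction_on with
  | _ m ih =>
    intro hm1 hmN
    have hdiagonal : a m m * x m = 0 := by
      rw [← h m hm1 hmN, sum_eq_single_of_mem m (by simp [hm1])]
      intro k hk hkm
      rw [mem_Icc] at hk
      rw [ih k (by omega) hk.1 (by omega), mul_zero]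
    exact (mul_eq_zero.mp hdiagonal).resolve_left (hdiag m hm1 hmN)

theorem Ioc_min_eq_Ioc (s b : ℕ) : Ioc (min s b) b = Ioc s b := by
  rcases le_total s b with h | h
  · rw [min_eq_left h]
  · rw [min_eq_right h, Ioc_self, Ioc_eq_empty_of_le h]

theorem sum_Icc_one_sub_sum_Icc_one_min {M : Type*} [AddCommGroup M] (f : ℕ → M) (s b : ℕ) :
    ∑ m ∈ Icc 1 b, f m - ∑ m ∈ Icc 1 (min s b), f m = ∑ m ∈ Ioc s b, f m := by
  rw [← zero_add 1, Icc_add_one_left_eq_Ioc, Icc_add_one_left_eq_Ioc, sub_eq_iff_eq_add',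
    ← Ioc_min_eq_Ioc s b]
  exact (sum_Ioc_consecutive f (Nat.zero_le _) (min_le_right s b)).symm

theorem pow_mul_sum_Ioc_mul_inv_pow {K : Type*} [Field K] {R : K} (hR : R ≠ 0) {f : ℕ → K}
    {b : ℕ} (hf : ∀ m, b < m → f m = 0) (s : ℕ) {N : ℕ} (hN : b ≤ s + N) :
    R ^ s * ∑ m ∈ Ioc s b, f m * R⁻¹ ^ m = ∑ k ∈ Icc 1 N, f (s + k) * R⁻¹ ^ k := by
  have hextend : ∑ m ∈ Ioc s b, f m * R⁻¹ ^ m = ∑ m ∈ Ioc s (s + N), f m * R⁻¹ ^ m :=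
    sum_subset (Ioc_subset_Ioc_right hN) fun m hm hmb => by
      rw [mem_Ioc] at hm hmb
      rw [hf m (by omega), zero_mul]
  have hcancel : R ^ s * R⁻¹ ^ s = 1 := by rw [← mul_pow, mul_inv_cancel₀ hR, one_pow]
  rw [hextend, ← Icc_add_one_left_eq_Ioc, ← map_add_left_Icc, sum_map, mul_sum]
  refine sum_congr rfl fun k _ => ?_
  rw [addLeftEmbedding_apply, pow_add]
  linear_combination (f (s + k) * R⁻¹ ^ k) * hcancel

/-- `boundaryCoeff b g y μ n k` is the coefficient of `r⁻¹ ^ k` in `r ^ n` times the bracket of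
the boundary condition for state `n`. -/
noncomputable def boundaryCoeff (b : ℕ) (g y : ℕ → ℝ) (μ : ℝ) (n k : ℕ) : ℂ :=
  (1 - (μ : ℂ)) * (g (n + k) : ℂ) +
    (μ : ℂ) * ∑ i ∈ range b, (y (i + 1) : ℂ) * (g (i + 1 + n + k) : ℂ)

theorem boundaryCoeff_of_add_eq {b : ℕ} {g : ℕ → ℝ} (hg : ∀ m, b < m → g m = 0)
    (y : ℕ → ℝ) (μ : ℝ) {n k : ℕ} (h : n + k = b) :
    boundaryCoeff b g y μ n k = (1 - (μ : ℂ)) * (g b : ℂ) := by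
  have htail : ∀ i, (g (i + 1 + n + k) : ℂ) = 0 := fun i => by
    rw [hg _ (by omega), Complex.ofReal_zero]
  simp only [boundaryCoeff, h, htail, mul_zero, sum_const_zero, add_zero]

theorem pow_mul_boundary_bracket {b : ℕ} {g : ℕ → ℝ} (hg : ∀ m, b < m → g m = 0)
    (y : ℕ → ℝ) (μ : ℝ) {R : ℂ} (hR : R ≠ 0) (n : ℕ) :
    R ^ n * ((1 - (μ : ℂ)) * (∑ i ∈ Icc (n + 1) b, (g i : ℂ) * R⁻¹ ^ i) +
        (μ : ℂ) * ∑' i : ℕ, (y (i + 1) : ℂ) * R ^ (i + 1) *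
          ((∑ m ∈ Icc 1 b, (g m : ℂ) * R⁻¹ ^ m) -
            ∑ m ∈ Icc 1 (min (i + 1 + n) b), (g m : ℂ) * R⁻¹ ^ m))
      = ∑ k ∈ Icc 1 (b - n), boundaryCoeff b g y μ n k * R⁻¹ ^ k := by
  have hgC : ∀ m, b < m → (g m : ℂ) = 0 := fun m hm => by rw [hg m hm, Complex.ofReal_zero]
  have hfirst : R ^ n * ∑ i ∈ Icc (n + 1) b, (g i : ℂ) * R⁻¹ ^ i
      = ∑ k ∈ Icc 1 (b - n), (g (n + k) : ℂ) * R⁻¹ ^ k := by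
    rw [Icc_add_one_left_eq_Ioc]
    exact pow_mul_sum_Ioc_mul_inv_pow hR hgC n (by omega)
  have hterm : ∀ i, R ^ n * ((y (i + 1) : ℂ) * R ^ (i + 1) *
      ((∑ m ∈ Icc 1 b, (g m : ℂ) * R⁻¹ ^ m) -
        ∑ m ∈ Icc 1 (min (i + 1 + n) b), (g m : ℂ) * R⁻¹ ^ m))
      = ∑ k ∈ Icc 1 (b - n), (y (i + 1) : ℂ) * (g (i + 1 + n + k) : ℂ) * R⁻¹ ^ k := by
    intro i
    calc _ = (y (i + 1) : ℂ) *
          (R ^ (i + 1 + n) * ∑ m ∈ Ioc (i + 1 + n) b, (g m : ℂ) * R⁻¹ ^ m) := by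
          rw [sum_Icc_one_sub_sum_Icc_one_min, pow_add]; ring
      _ = _ := by
          rw [pow_mul_sum_Ioc_mul_inv_pow hR hgC _ (N := b - n) (by omega), mul_sum]
          exact sum_congr rfl fun k _ => (mul_assoc _ _ _).symm
  have hfinite : ∀ i ∉ range b, (y (i + 1) : ℂ) * R ^ (i + 1) *
      ((∑ m ∈ Icc 1 b, (g m : ℂ) * R⁻¹ ^ m) -
        ∑ m ∈ Icc 1 (min (i + 1 + n) b), (g m : ℂ) * R⁻¹ ^ m) = 0 := by
    intro i hi
    rw [mem_range] at hi
    rw [sum_Icc_one_sub_sum_Icc_one_min, Ioc_eq_empty_of_le (by omega), sum_empty, mul_zero]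
  rw [tsum_eq_sum hfinite, mul_add, mul_left_comm, hfirst, mul_left_comm, mul_sum (range b),
    sum_congr rfl fun i _ => hterm i, sum_comm, mul_sum, mul_sum, ← sum_add_distrib]
  refine sum_congr rfl fun k _ => ?_
  rw [boundaryCoeff, ← sum_mul]
  ring

theorem stmt_3_general (b : ℕ)
    (r c : Fin b → ℂ) (hr0 : ∀ j, r j ≠ 0)
    (g y : ℕ → ℝ) (μ : ℝ) (hμ1 : μ < 1)
    (hg : ∀ i, i ∉ Finset.Icc 1 b → g i = 0)
    (hgb : 0 < g b)
    (hcond : ∀ n, 1 ≤ n → n ≤ b - 1 →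
      (∑ j, c j * r j ^ n *
        ((1 - (μ : ℂ)) * (∑ i ∈ Finset.Icc (n + 1) b, (g i : ℂ) * (r j)⁻¹ ^ i) +
          (μ : ℂ) * ∑' i : ℕ, (y (i + 1) : ℂ) * r j ^ (i + 1) *
            ((∑ m ∈ Finset.Icc 1 b, (g m : ℂ) * (r j)⁻¹ ^ m) -
              ∑ m ∈ Finset.Icc 1 (min (i + 1 + n) b), (g m : ℂ) * (r j)⁻¹ ^ m)))
        = 0) :
    ∀ k, 1 ≤ k → k ≤ b - 1 → ∑ j, c j * (r j)⁻¹ ^ k = 0 := by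
  have hg_gt : ∀ m, b < m → g m = 0 := fun m hm => hg m (by rw [mem_Icc]; omega)
  have hlead : (1 - (μ : ℂ)) * (g b : ℂ) ≠ 0 :=
    mul_ne_zero (sub_ne_zero.mpr (by exact_mod_cast hμ1.ne')) (Complex.ofReal_ne_zero.mpr hgb.ne')
  have hrow : ∀ n, 1 ≤ n → n ≤ b - 1 →
      ∑ k ∈ Icc 1 (b - n), boundaryCoeff b g y μ n k * ∑ j, c j * (r j)⁻¹ ^ k = 0 := by
    intro n hn1 hn2
    rw [← hcond n hn1 hn2]
    calc _ = ∑ j, c j * ∑ k ∈ Icc 1 (b - n), boundaryCoeff b g y μ n k * (r j)⁻¹ ^ k := by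
          simp only [mul_sum]
          rw [sum_comm]
          exact sum_congr rfl fun _ _ => sum_congr rfl fun _ _ => by ring
      _ = _ := sum_congr rfl fun j _ => by rw [mul_assoc, pow_mul_boundary_bracket hg_gt y μ (hr0 j)]
  refine eq_zero_of_sum_Icc_one_mul_eq_zero (a := fun m k => boundaryCoeff b g y μ (b - m) k)
    (fun m _ hm => ?_) (fun m hm1 hm => ?_)
  · rwa [boundaryCoeff_of_add_eq hg_gt y μ (by omega)]
  · simpa only [Nat.sub_sub_self (show m ≤ b by omega)] using hrow (b - m) (by omega) (by omega)

/-- In the `GI^X/Geo^Y/1` EAS queue, the boundary conditions for states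
`1 ≤ n ≤ b-1` force the linear relations `∑_j c_j r_j^{-k} = 0`,
`k = 1, …, b-1`. -/
theorem stmt_3 (b : ℕ) (hb : 1 ≤ b)
    (r c : Fin b → ℂ) (hr0 : ∀ j, r j ≠ 0) (hr1 : ∀ j, ‖r j‖ < 1)
    (g y : ℕ → ℝ) (μ : ℝ) (hμ0 : 0 < μ) (hμ1 : μ < 1)
    (hgpos : ∀ i, 0 ≤ g i) (hg : ∀ i, i ∉ Finset.Icc 1 b → g i = 0)
    (hgb : 0 < g b) (hgsum : ∑ i ∈ Finset.Icc 1 b, g i = 1)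
    (hy0 : y 0 = 0) (hypos : ∀ i, 0 ≤ y i) (hysum : ∑' i : ℕ, y i = 1)
    (hcond : ∀ n, 1 ≤ n → n ≤ b - 1 →
      (∑ j, c j * r j ^ n *
        ((1 - (μ : ℂ)) * (∑ i ∈ Finset.Icc (n + 1) b, (g i : ℂ) * (r j)⁻¹ ^ i) +
          (μ : ℂ) * ∑' i : ℕ, (y (i + 1) : ℂ) * r j ^ (i + 1) *
            ((∑ m ∈ Finset.Icc 1 b, (g m : ℂ) * (r j)⁻¹ ^ m) -
              ∑ m ∈ Finset.Icc 1 (min (i + 1 + n) b), (g m : ℂ) * (r j)⁻¹ ^ m)))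
        = 0) :
    ∀ k, 1 ≤ k → k ≤ b - 1 → ∑ j, c j * (r j)⁻¹ ^ k = 0 :=
  stmt_3_general b r c hr0 g y μ hμ1 hg hgb hcond
end

section
/- Let $\hat\mu>0$, let $Y$ be a pgf, let $\hat A$ be the distribution function of a positive random variable $\hat A$ with Laplace–Stieltjes transform $A^*$, and for $\Delta>0$ define the discretized pgf $A_\Delta(w) = \sum_{n=1}^{\infty} P\big((n-1)\Delta < \hat A \le n\Delta\big) w^n$. Then for each fixed $s$ with $|s|\le 1$, $\lim_{\Delta\to 0^+} A_\Delta\big(1-\hat\mu\Delta + \hat\mu\Delta\, Y(s)\big) = A^*\big(\hat\mu(1-Y(s))\big) = \int_0^\infty e^{-\hat\mu(1-Y(s))x}\, d\hat A(x)$. -/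
/-! With `c = μ̂ (1 - Y(s))` the base of the power is `z = 1 - cΔ`, and since `⌈x/Δ⌉₊ = n + 1`
exactly on the `n`-th slot `(nΔ, (n+1)Δ]`, the discretized pgf is `∫ z ^ ⌈x/Δ⌉₊ dν(x)`.
For `μ̂Δ ≤ 1`, `z` is a convex combination of `1` and `Y(s)`, so `‖z‖ ≤ 1` and the integrands
are bounded by `1`. Pointwise `⌈x/Δ⌉₊ · cΔ → cx`, hence `(1 - cΔ) ^ ⌈x/Δ⌉₊ → e^{-cx}`, and
dominated convergence finishes the proof. -/

open MeasureTheory Filter Set Topology Asymptotics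

theorem Complex.tendsto_one_add_pow_exp_of_tendsto_mul {α : Type*} {l : Filter α} {g : α → ℂ}
    {n : α → ℕ} {t : ℂ} (hg : Tendsto g l (𝓝 0)) (hng : Tendsto (fun a ↦ n a * g a) l (𝓝 t)) :
    Tendsto (fun a ↦ (1 + g a) ^ n a) l (𝓝 (exp t)) := by
  have hlog : Tendsto (fun a ↦ n a * log (1 + g a)) l (𝓝 t) := by
    refine hng.congr_dist ?_
    have hsmall : Tendsto (fun a ↦ n a * g a * g a) l (𝓝 0) := by
      simpa using hng.mul hg
    refine IsBigO.trans_tendsto ?_ hsmall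
    simp_rw [dist_comm (_ * g _), dist_eq, ← mul_sub, isBigO_norm_left]
    simpa [sq, mul_assoc] using
      (isBigO_refl (fun a ↦ (n a : ℂ)) l).mul (log_sub_self_isBigO.comp_tendsto hg)
  refine ((continuous_exp.tendsto _).comp hlog).congr' ?_
  filter_upwards [hg.eventually_ne (show (0 : ℂ) ≠ -1 by norm_num)] with a ha
  have h1 : 1 + g a ≠ 0 := fun h ↦ ha (eq_neg_of_add_eq_zero_right h)
  simp only [Function.comp_apply, exp_nat_mul, exp_log h1]

theorem tendsto_natCeil_div_mul_nhdsGT_zero {x : ℝ} (hx : 0 ≤ x) :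
    Tendsto (fun Δ : ℝ ↦ (⌈x / Δ⌉₊ : ℝ) * Δ) (𝓝[>] 0) (𝓝 x) := by
  refine ((tendsto_nat_ceil_mul_div_atTop hx).comp tendsto_inv_nhdsGT_zero).congr fun Δ ↦ ?_
  simp [div_eq_mul_inv]

theorem tendsto_one_sub_mul_pow_natCeil_div (c : ℂ) {x : ℝ} (hx : 0 ≤ x) :
    Tendsto (fun Δ : ℝ ↦ (1 - c * Δ) ^ ⌈x / Δ⌉₊) (𝓝[>] 0) (𝓝 (Complex.exp (-c * x))) := by
  have hg : Tendsto (fun Δ : ℝ ↦ -(c * Δ)) (𝓝[>] 0) (𝓝 0) := by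
    have : Continuous fun Δ : ℝ ↦ -(c * Δ) := by fun_prop
    simpa using (this.tendsto 0).mono_left nhdsWithin_le_nhds
  have hng : Tendsto (fun Δ : ℝ ↦ (⌈x / Δ⌉₊ : ℂ) * -(c * Δ)) (𝓝[>] 0) (𝓝 (-c * x)) := by
    have := ((Complex.continuous_ofReal.tendsto x).comp
      (tendsto_natCeil_div_mul_nhdsGT_zero hx)).const_mul (-c)
    refine this.congr fun Δ ↦ ?_
    simp only [Function.comp_apply]
    push_cast
    ring
  simpa [sub_eq_add_neg] using Complex.tendsto_one_add_pow_exp_of_tendsto_mul hg hng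

theorem preimage_natCeil_div_singleton_zero {Δ : ℝ} (hΔ : 0 < Δ) :
    (fun x : ℝ ↦ ⌈x / Δ⌉₊) ⁻¹' {0} = Iic 0 := by
  ext x
  simp [Nat.ceil_eq_zero, div_le_iff₀ hΔ]

theorem preimage_natCeil_div_singleton_succ {Δ : ℝ} (hΔ : 0 < Δ) (n : ℕ) :
    (fun x : ℝ ↦ ⌈x / Δ⌉₊) ⁻¹' {n + 1} = Ioc (n * Δ) ((n + 1) * Δ) := by
  ext x
  simp [Nat.ceil_eq_iff, lt_div_iff₀ hΔ, div_le_iff₀ hΔ]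

theorem integral_pow_natCeil_div_eq_tsum (ν : Measure ℝ) [IsFiniteMeasure ν]
    (hpos : ν (Iic 0) = 0) {z : ℂ} (hz : ‖z‖ ≤ 1) {Δ : ℝ} (hΔ : 0 < Δ) :
    ∫ x, z ^ ⌈x / Δ⌉₊ ∂ν = ∑' n : ℕ, (ν.real (Ioc (n * Δ) ((n + 1) * Δ)) : ℂ) * z ^ (n + 1) := by
  have hceil : Measurable fun x : ℝ ↦ ⌈x / Δ⌉₊ := Nat.measurable_ceil.comp (measurable_div_const Δ)
  have hint : Integrable (fun n : ℕ ↦ z ^ n) (ν.map fun x ↦ ⌈x / Δ⌉₊) :=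
    .of_bound .of_discrete 1 (.of_forall fun n ↦ by simpa using pow_le_one₀ (norm_nonneg z) hz)
  rw [← integral_map hceil.aemeasurable .of_discrete, integral_countable hint]
  simp_rw [map_measureReal_apply hceil (measurableSet_singleton _)]
  refine (Nat.succ_injective.tsum_eq fun n hn ↦ ?_).symm.trans ?_
  · cases n with
    | zero => simp [preimage_natCeil_div_singleton_zero hΔ, measureReal_def, hpos] at hn
    | succ n => exact mem_range_self n
  · simp [preimage_natCeil_div_singleton_succ hΔ, Complex.real_smul]

theorem norm_tsum_mul_pow_le_one {y : ℕ → ℝ} (hy : ∀ i, 0 ≤ y i) (hysum : ∑' i, y i = 1)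
    {s : ℂ} (hs : ‖s‖ ≤ 1) : ‖∑' i, (y i : ℂ) * s ^ i‖ ≤ 1 := by
  have hsummable : Summable y := by
    by_contra h
    simp [tsum_eq_zero_of_not_summable h] at hysum
  refine tsum_of_norm_bounded (hysum ▸ hsummable.hasSum) fun i ↦ ?_
  calc ‖(y i : ℂ) * s ^ i‖ = y i * ‖s‖ ^ i := by simp [abs_of_nonneg (hy i)]
    _ ≤ y i * 1 := mul_le_mul_of_nonneg_left (pow_le_one₀ (norm_nonneg s) hs) (hy i)
    _ = y i := mul_one _

theorem norm_one_sub_add_mul_le_one {a : ℝ} (ha₀ : 0 ≤ a) (ha₁ : a ≤ 1) {w : ℂ} (hw : ‖w‖ ≤ 1) :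
    ‖1 - a + a * w‖ ≤ 1 := by
  have := convex_closedBall (0 : ℂ) 1 (by simp : (1 : ℂ) ∈ Metric.closedBall 0 1)
    (mem_closedBall_zero_iff.mpr hw) (sub_nonneg.mpr ha₁) ha₀ (by ring)
  simpa [Complex.real_smul, sub_mul] using this

theorem tendsto_integral_one_sub_mul_pow_natCeil_div (ν : Measure ℝ) [IsFiniteMeasure ν]
    (hpos : ν (Iic 0) = 0) {c : ℂ} (hc : ∀ᶠ Δ : ℝ in 𝓝[>] 0, ‖1 - c * Δ‖ ≤ 1) :
    Tendsto (fun Δ : ℝ ↦ ∫ x, (1 - c * Δ) ^ ⌈x / Δ⌉₊ ∂ν) (𝓝[>] 0)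
      (𝓝 (∫ x, Complex.exp (-c * x) ∂ν)) := by
  have hnonneg : ∀ᵐ x ∂ν, 0 ≤ x :=
    measure_mono_null (fun x (hx : ¬0 ≤ x) ↦ (not_le.mp hx).le) hpos
  refine tendsto_integral_filter_of_dominated_convergence (fun _ ↦ 1)
    (.of_forall fun Δ ↦ (measurable_from_nat.comp
      (Nat.measurable_ceil.comp (measurable_div_const Δ))).aestronglyMeasurable)
    ?_ (integrable_const 1) (hnonneg.mono fun x hx ↦ tendsto_one_sub_mul_pow_natCeil_div c hx)
  filter_upwards [hc] with Δ hΔ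
  exact .of_forall fun x ↦ by simpa using pow_le_one₀ (norm_nonneg _) hΔ

theorem stmt_6_general (ν : Measure ℝ) [IsProbabilityMeasure ν]
    (hpos : ν (Set.Iic 0) = 0)
    (muh : ℝ) (hmuh : 0 < muh)
    (y : ℕ → ℝ) (hypos : ∀ i, 0 ≤ y i) (hysum : ∑' i : ℕ, y i = 1)
    (s : ℂ) (hs : ‖s‖ ≤ 1)
    (Ys : ℂ) (hYs : Ys = ∑' i : ℕ, (y i : ℂ) * s ^ i) :
    Filter.Tendsto
      (fun Δ : ℝ => ∑' n : ℕ,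
        ((ν (Set.Ioc ((n : ℝ) * Δ) (((n : ℝ) + 1) * Δ))).toReal : ℂ) *
          ((1 : ℂ) - (muh : ℂ) * Δ + (muh : ℂ) * Δ * Ys) ^ (n + 1))
      (nhdsWithin 0 (Set.Ioi 0))
      (nhds (∫ x : ℝ, Complex.exp (-((muh : ℂ) * (1 - Ys)) * (x : ℂ)) ∂ν)) := by
  have hYs₁ : ‖Ys‖ ≤ 1 := hYs ▸ norm_tsum_mul_pow_le_one hypos hysum hs
  have hbase : ∀ Δ : ℝ, (1 : ℂ) - muh * Δ + muh * Δ * Ys = 1 - muh * (1 - Ys) * Δ :=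
    fun Δ ↦ by ring
  have hsmall : ∀ᶠ Δ : ℝ in 𝓝[>] 0, 0 < Δ ∧ ‖(1 : ℂ) - muh * Δ + muh * Δ * Ys‖ ≤ 1 := by
    filter_upwards [Ioo_mem_nhdsGT (inv_pos.mpr hmuh)] with Δ hΔ
    have hΔ₁ : muh * Δ ≤ 1 :=
      ((lt_inv_mul_iff₀ hmuh).mp (by simpa using hΔ.2)).le
    refine ⟨hΔ.1, ?_⟩
    simpa using norm_one_sub_add_mul_le_one (mul_pos hmuh hΔ.1).le hΔ₁ hYs₁
  refine (tendsto_integral_one_sub_mul_pow_natCeil_div ν hpos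
    (hsmall.mono fun Δ hΔ ↦ hbase Δ ▸ hΔ.2)).congr' ?_
  filter_upwards [hsmall] with Δ ⟨hΔ, hnorm⟩
  rw [← hbase, integral_pow_natCeil_div_eq_tsum ν hpos hnorm hΔ]
  rfl

/-- As the slot length `Δ → 0⁺`, the discretized inter-arrival pgf evaluated at
`1 - μ̂Δ + μ̂Δ Y(s)` converges to the Laplace–Stieltjes transform
`A*(μ̂(1 - Y(s))) = ∫ e^{-μ̂(1-Y(s))x} dÂ(x)`. -/
theorem stmt_6 (ν : Measure ℝ) [IsProbabilityMeasure ν]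
    (hpos : ν (Set.Iic 0) = 0)
    (muh : ℝ) (hmuh : 0 < muh)
    (y : ℕ → ℝ) (hy0 : y 0 = 0) (hypos : ∀ i, 0 ≤ y i) (hysum : ∑' i : ℕ, y i = 1)
    (s : ℂ) (hs : ‖s‖ ≤ 1)
    (Ys : ℂ) (hYs : Ys = ∑' i : ℕ, (y i : ℂ) * s ^ i) :
    Filter.Tendsto
      (fun Δ : ℝ => ∑' n : ℕ,
        ((ν (Set.Ioc ((n : ℝ) * Δ) (((n : ℝ) + 1) * Δ))).toReal : ℂ) *
          ((1 : ℂ) - (muh : ℂ) * Δ + (muh : ℂ) * Δ * Ys) ^ (n + 1))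
      (nhdsWithin 0 (Set.Ioi 0))
      (nhds (∫ x : ℝ, Complex.exp (-((muh : ℂ) * (1 - Ys)) * (x : ℂ)) ∂ν)) :=
  stmt_6_general ν hpos muh hmuh y hypos hysum s hs Ys hYs
end
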